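/- arXiv:math/0406224 — 3 statements merged into one kernel-verified Lean document; each statement's English description precedes it below -/
import Mathlib

section
/- For all integers i ≥ 1 and b with 4 ≤ b ≤ 2i + 6, the convex hull P of the points (0,0), (b−4, 0), (i+1, 1), (0, 2) in ℝ² is a convex lattice polygon with exactly b lattice points on its boundary and exactly i lattice points in its interior. -/
open Set MeasureTheory

noncomputable section

/-- A point of the plane is a lattice point if both coordinates are integers. -/
def latticePt (x : ℝ × ℝ) : Prop := (∃ m : ℤ, x.1 = m) ∧ (∃ n : ℤ, x.2 = n)

/-- A convex lattice polygon: the convex hull of finitely many lattice points,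
with nonempty interior (i.e. 2-dimensional). -/
def IsConvexLatticePolygon (P : Set (ℝ × ℝ)) : Prop :=
  (∃ V : Finset (ℝ × ℝ), (∀ v ∈ V, latticePt v) ∧ P = convexHull ℝ (V : Set (ℝ × ℝ))) ∧
    (interior P).Nonempty

/-- Number of lattice points on the boundary of `P`. -/
def bcount (P : Set (ℝ × ℝ)) : ℕ := {x | x ∈ frontier P ∧ latticePt x}.ncard

/-- Number of lattice points in the interior of `P`. -/
def icount (P : Set (ℝ × ℝ)) : ℕ := {x | x ∈ interior P ∧ latticePt x}.ncard

/-- The area of `P` (two-dimensional Lebesgue measure). -/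
def area (P : Set (ℝ × ℝ)) : ℝ := (volume P).toReal

/-- The affine map `x ↦ A x + t` given by an integer matrix `A` and integer vector `t`. -/
def affineLatticeMap (A : Matrix (Fin 2) (Fin 2) ℤ) (t : ℤ × ℤ) (x : ℝ × ℝ) : ℝ × ℝ :=
  ((A 0 0 : ℝ) * x.1 + (A 0 1 : ℝ) * x.2 + (t.1 : ℝ),
   (A 1 0 : ℝ) * x.1 + (A 1 1 : ℝ) * x.2 + (t.2 : ℝ))

/-- `P` and `Q` are lattice equivalent: `Q = Φ(P)` for an affine map `Φ(x) = A x + t`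
with `A` an integer matrix of determinant `±1` and `t` an integer vector. -/
def LatticeEquiv (P Q : Set (ℝ × ℝ)) : Prop :=
  ∃ (A : Matrix (Fin 2) (Fin 2) ℤ) (t : ℤ × ℤ),
    (A.det = 1 ∨ A.det = -1) ∧ Q = affineLatticeMap A t '' P

/-- The dilated standard triangle `kΔ = conv{(0,0), (k,0), (0,k)}`. -/
def stdTriangle (k : ℕ) : Set (ℝ × ℝ) :=
  convexHull ℝ {((0 : ℝ), (0 : ℝ)), ((k : ℝ), (0 : ℝ)), ((0 : ℝ), (k : ℝ))}

/-- `P⁽¹⁾`: the convex hull of the lattice points in the interior of `P`. -/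
def innerHull (P : Set (ℝ × ℝ)) : Set (ℝ × ℝ) :=
  convexHull ℝ {x | x ∈ interior P ∧ latticePt x}

/-!
The polygon is the intersection of the half-planes `x ≥ 0`, `y ≥ 0`,
`x + (b - i - 5) y ≤ b - 4` and `x + (i + 1) y ≤ 2 (i + 1)`: each horizontal slice runs from the
edge `x = 0` to the edge through `(b - 4, 0), (i + 1, 1)` or the one through `(i + 1, 1), (0, 2)`.
Since a nonzero linear functional is an open map, the interior is cut out by the strict
inequalities. The last inequality confines the lattice points to the rows `y = 0, 1, 2`; the
interior ones are `(1, 1), …, (i, 1)`, and the boundary ones are the `b - 3` points of the bottom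
edge together with `(0, 1)`, `(i + 1, 1)` and `(0, 2)`.
-/

def halfPlane (u v c : ℝ) : Set (ℝ × ℝ) := {p | u * p.1 + v * p.2 ≤ c}

lemma convex_halfPlane (u v c : ℝ) : Convex ℝ (halfPlane u v c) :=
  convex_halfSpace_le ((u • LinearMap.fst ℝ ℝ ℝ + v • LinearMap.snd ℝ ℝ ℝ).isLinear) c

lemma isClosed_halfPlane (u v c : ℝ) : IsClosed (halfPlane u v c) :=
  isClosed_le (by fun_prop) continuous_const

lemma interior_halfPlane {u v : ℝ} (huv : u ≠ 0 ∨ v ≠ 0) (c : ℝ) :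
    interior (halfPlane u v c) = {p | u * p.1 + v * p.2 < c} := by
  let f : StrongDual ℝ (ℝ × ℝ) :=
    u • ContinuousLinearMap.fst ℝ ℝ ℝ + v • ContinuousLinearMap.snd ℝ ℝ ℝ
  have hf : f ≠ 0 := by
    intro hf
    have hu : f (1, 0) = 0 := by rw [hf]; rfl
    have hv : f (0, 1) = 0 := by rw [hf]; rfl
    simp only [f, add_apply, smul_apply,
      ContinuousLinearMap.coe_fst', ContinuousLinearMap.coe_snd', smul_eq_mul, mul_one, mul_zero,
      add_zero, zero_add] at hu hv
    exact huv.elim (· hu) (· hv)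
  change interior (f ⁻¹' Iic c) = f ⁻¹' Iio c
  rw [← (f.isOpenMap_of_ne_zero hf).preimage_interior_eq_interior_preimage f.continuous,
    interior_Iic]

section ConvexSlices

variable {𝕜 E : Type*} [Field 𝕜] [LinearOrder 𝕜] [IsStrictOrderedRing 𝕜] [AddCommGroup E]
  [Module 𝕜 E]

lemma Convex.mk_mem_of_fst_mem_Icc {s : Set (𝕜 × E)} (hs : Convex 𝕜 s) {a c x : 𝕜} {y : E}
    (ha : (a, y) ∈ s) (hc : (c, y) ∈ s) (hx : x ∈ Icc a c) : (x, y) ∈ s :=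
  hs.segment_subset ha hc <|
    Prod.image_mk_segment_left (𝕜 := 𝕜) a c y ▸ mem_image_of_mem _ (Icc_subset_segment hx)

lemma Convex.mk_mem_of_snd_mem_Icc {s : Set (E × 𝕜)} (hs : Convex 𝕜 s) {a c y : 𝕜} {x : E}
    (ha : (x, a) ∈ s) (hc : (x, c) ∈ s) (hy : y ∈ Icc a c) : (x, y) ∈ s :=
  hs.segment_subset ha hc <|
    Prod.image_mk_segment_right (𝕜 := 𝕜) x a c ▸ mem_image_of_mem _ (Icc_subset_segment hy)

end ConvexSlices

lemma ncard_setOf_mem_and_latticePt (S : Set (ℝ × ℝ)) :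
    {x | x ∈ S ∧ latticePt x}.ncard = {z : ℤ × ℤ | ((z.1 : ℝ), (z.2 : ℝ)) ∈ S}.ncard := by
  have hinj : Function.Injective fun z : ℤ × ℤ => ((z.1 : ℝ), (z.2 : ℝ)) := by
    rintro ⟨m, n⟩ ⟨m', n'⟩ h
    simpa using h
  rw [← ncard_image_of_injective _ hinj]
  congr 1
  ext ⟨x, y⟩
  simp only [latticePt, mem_ofPred_eq, mem_image, Prod.mk.injEq, Prod.exists]
  constructor
  · rintro ⟨hS, ⟨m, rfl⟩, ⟨n, rfl⟩⟩
    exact ⟨m, n, hS, rfl, rfl⟩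
  · rintro ⟨m, n, hS, rfl, rfl⟩
    exact ⟨hS, ⟨m, rfl⟩, ⟨n, rfl⟩⟩

lemma Int.ncard_Icc (a b : ℤ) : (Icc a b).ncard = (b + 1 - a).toNat := by
  rw [← Finset.coe_Icc, ncard_coe_finset, Int.card_Icc]

def shoe (i b : ℤ) : Set (ℝ × ℝ) :=
  halfPlane (-1) 0 0 ∩ halfPlane 0 (-1) 0 ∩ halfPlane 1 (b - i - 5) (b - 4) ∩
    halfPlane 1 (i + 1) (2 * (i + 1))

lemma isClosed_shoe (i b : ℤ) : IsClosed (shoe i b) :=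
  (((isClosed_halfPlane ..).inter (isClosed_halfPlane ..)).inter (isClosed_halfPlane ..)).inter
    (isClosed_halfPlane ..)

lemma convex_shoe (i b : ℤ) : Convex ℝ (shoe i b) :=
  (((convex_halfPlane ..).inter (convex_halfPlane ..)).inter (convex_halfPlane ..)).inter
    (convex_halfPlane ..)

section Shoe

variable {i b : ℤ}

lemma mem_shoe {x y : ℝ} :
    (x, y) ∈ shoe i b ↔
      0 ≤ x ∧ 0 ≤ y ∧ x + (b - i - 5) * y ≤ b - 4 ∧ x + (i + 1) * y ≤ 2 * (i + 1) := by
  simp only [shoe, halfPlane, mem_inter_iff, mem_ofPred_eq, and_assoc]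
  constructor <;> rintro ⟨h₁, h₂, h₃, h₄⟩ <;>
    exact ⟨by linarith, by linarith, by linarith, by linarith⟩

lemma mem_interior_shoe {x y : ℝ} :
    (x, y) ∈ interior (shoe i b) ↔
      0 < x ∧ 0 < y ∧ x + (b - i - 5) * y < b - 4 ∧ x + (i + 1) * y < 2 * (i + 1) := by
  simp only [shoe, interior_inter, mem_inter_iff]
  rw [interior_halfPlane (by norm_num), interior_halfPlane (by norm_num),
    interior_halfPlane (by norm_num), interior_halfPlane (by norm_num)]
  simp only [mem_ofPred_eq, and_assoc]
  constructor <;> rintro ⟨h₁, h₂, h₃, h₄⟩ <;>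
    exact ⟨by linarith, by linarith, by linarith, by linarith⟩

lemma convexHull_subset_shoe (hb4 : 4 ≤ b) (hb : b ≤ 2 * i + 6) :
    convexHull ℝ {((0 : ℝ), (0 : ℝ)), ((b : ℝ) - 4, (0 : ℝ)),
      ((i : ℝ) + 1, (1 : ℝ)), ((0 : ℝ), (2 : ℝ))} ⊆ shoe i b := by
  have hb4' : (4 : ℝ) ≤ b := by exact_mod_cast hb4
  have hb' : (b : ℝ) ≤ 2 * i + 6 := by exact_mod_cast hb
  refine convexHull_min ?_ (convex_shoe i b)
  simp only [insert_subset_iff, singleton_subset_iff, mem_shoe]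
  refine ⟨?_, ?_, ?_, ?_⟩ <;> refine ⟨?_, ?_, ?_, ?_⟩ <;> linarith

lemma shoe_subset_convexHull (hi : 0 ≤ i) :
    shoe i b ⊆ convexHull ℝ {((0 : ℝ), (0 : ℝ)), ((b : ℝ) - 4, (0 : ℝ)),
      ((i : ℝ) + 1, (1 : ℝ)), ((0 : ℝ), (2 : ℝ))} := by
  have hi' : (0 : ℝ) ≤ i := by exact_mod_cast hi
  rintro ⟨x, y⟩ h
  obtain ⟨hx, hy, h₃, h₄⟩ := mem_shoe.1 h
  set H := convexHull ℝ {((0 : ℝ), (0 : ℝ)), ((b : ℝ) - 4, (0 : ℝ)),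
      ((i : ℝ) + 1, (1 : ℝ)), ((0 : ℝ), (2 : ℝ))}
  have hH : Convex ℝ H := convex_convexHull ℝ _
  have hO : ((0 : ℝ), (0 : ℝ)) ∈ H := subset_convexHull ℝ _ (by simp)
  have hA : ((b : ℝ) - 4, (0 : ℝ)) ∈ H := subset_convexHull ℝ _ (by simp)
  have hB : ((i : ℝ) + 1, (1 : ℝ)) ∈ H := subset_convexHull ℝ _ (by simp)
  have hC : ((0 : ℝ), (2 : ℝ)) ∈ H := subset_convexHull ℝ _ (by simp)
  have hleft : ((0 : ℝ), y) ∈ H := hH.mk_mem_of_snd_mem_Icc hO hC ⟨hy, by nlinarith⟩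
  rcases le_total y 1 with hy1 | hy1
  · have hright : ((b : ℝ) - 4 + (i + 5 - b) * y, y) ∈ H :=
      hH.segment_subset hA hB ⟨1 - y, y, by linarith, hy, by ring, by ext <;> simp; ring⟩
    exact hH.mk_mem_of_fst_mem_Icc hleft hright ⟨hx, by linarith⟩
  · have hright : (((i : ℝ) + 1) * (2 - y), y) ∈ H :=
      hH.segment_subset hB hC ⟨2 - y, y - 1, by nlinarith, by linarith, by ring,
        by ext <;> simp <;> ring⟩
    exact hH.mk_mem_of_fst_mem_Icc hleft hright ⟨hx, by linarith⟩

lemma intCast_mem_interior_shoe_iff (hi : 0 ≤ i) {m n : ℤ} :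
    ((m : ℝ), (n : ℝ)) ∈ interior (shoe i b) ↔ m ∈ Icc 1 i ∧ n = 1 := by
  rw [mem_interior_shoe, mem_Icc]
  norm_cast
  constructor
  · rintro ⟨hm, hn, h₃, h₄⟩
    obtain rfl : n = 1 := by
      have : n < 2 := by nlinarith
      omega
    omega
  · rintro ⟨⟨h₁, h₂⟩, rfl⟩
    omega

lemma intCast_mem_frontier_shoe_iff (hi : 0 ≤ i) (hb : b ≤ 2 * i + 6) {m n : ℤ} :
    ((m : ℝ), (n : ℝ)) ∈ frontier (shoe i b) ↔
      m ∈ Icc 0 (b - 4) ∧ n = 0 ∨ (m, n) ∈ ({(0, 1), (i + 1, 1), (0, 2)} : Set (ℤ × ℤ)) := by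
  rw [(isClosed_shoe i b).frontier_eq, mem_sdiff, mem_shoe, mem_interior_shoe]
  norm_cast
  simp only [mem_Icc, mem_insert_iff, mem_singleton_iff, Prod.mk.injEq]
  constructor
  · rintro ⟨⟨hm, hn, h₃, h₄⟩, hint⟩
    have : n ≤ 2 := by nlinarith
    interval_cases n <;> omega
  · rintro (⟨⟨h₁, h₂⟩, rfl⟩ | ⟨rfl, rfl⟩ | ⟨rfl, rfl⟩ | ⟨rfl, rfl⟩) <;> omega

lemma icount_shoe (hi : 0 ≤ i) : (icount (shoe i b) : ℤ) = i := by
  have hlattice : {z : ℤ × ℤ | ((z.1 : ℝ), (z.2 : ℝ)) ∈ interior (shoe i b)} =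
      Icc 1 i ×ˢ {1} := by
    ext ⟨m, n⟩
    exact intCast_mem_interior_shoe_iff hi
  rw [icount, ncard_setOf_mem_and_latticePt, hlattice, ncard_prod, Int.ncard_Icc,
    ncard_singleton]
  omega

lemma bcount_shoe (hi : 0 ≤ i) (hb3 : 3 ≤ b) (hb : b ≤ 2 * i + 6) :
    (bcount (shoe i b) : ℤ) = b := by
  have hlattice : {z : ℤ × ℤ | ((z.1 : ℝ), (z.2 : ℝ)) ∈ frontier (shoe i b)} =
      Icc 0 (b - 4) ×ˢ {0} ∪ {(0, 1), (i + 1, 1), (0, 2)} := by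
    ext ⟨m, n⟩
    exact intCast_mem_frontier_shoe_iff hi hb
  have hdisj : Disjoint (Icc 0 (b - 4) ×ˢ {(0 : ℤ)})
      ({(0, 1), (i + 1, 1), (0, 2)} : Set (ℤ × ℤ)) := by
    rw [disjoint_left]
    rintro ⟨m, n⟩ ⟨-, rfl⟩ h
    simp at h
  have hthree : ({(0, 1), (i + 1, 1), (0, 2)} : Set (ℤ × ℤ)).ncard = 3 :=
    ncard_eq_three.2 ⟨_, _, _, by simp only [ne_eq, Prod.mk.injEq]; omega, by simp, by simp, rfl⟩
  rw [bcount, ncard_setOf_mem_and_latticePt, hlattice, ncard_union_eq hdisj, ncard_prod,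
    Int.ncard_Icc, ncard_singleton, hthree]
  omega

end Shoe

/-- For integers `i ≥ 1` and `4 ≤ b ≤ 2 i + 6`, the convex hull of
`(0,0), (b−4,0), (i+1,1), (0,2)` is a convex lattice polygon with exactly `b`
boundary lattice points and exactly `i` interior lattice points. -/
theorem shoe_family (i b : ℤ) (hi : 1 ≤ i) (hb4 : 4 ≤ b) (hb : b ≤ 2 * i + 6) :
    IsConvexLatticePolygon
      (convexHull ℝ {((0 : ℝ), (0 : ℝ)), ((b : ℝ) - 4, (0 : ℝ)),
        ((i : ℝ) + 1, (1 : ℝ)), ((0 : ℝ), (2 : ℝ))}) ∧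
    (bcount (convexHull ℝ {((0 : ℝ), (0 : ℝ)), ((b : ℝ) - 4, (0 : ℝ)),
        ((i : ℝ) + 1, (1 : ℝ)), ((0 : ℝ), (2 : ℝ))}) : ℤ) = b ∧
    (icount (convexHull ℝ {((0 : ℝ), (0 : ℝ)), ((b : ℝ) - 4, (0 : ℝ)),
        ((i : ℝ) + 1, (1 : ℝ)), ((0 : ℝ), (2 : ℝ))}) : ℤ) = i := by
  have hP : convexHull ℝ {((0 : ℝ), (0 : ℝ)), ((b : ℝ) - 4, (0 : ℝ)),
      ((i : ℝ) + 1, (1 : ℝ)), ((0 : ℝ), (2 : ℝ))} = shoe i b :=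
    (convexHull_subset_shoe hb4 hb).antisymm (shoe_subset_convexHull (by omega))
  have hicount : (icount (shoe i b) : ℤ) = i := icount_shoe (by omega)
  refine ⟨⟨⟨{((0 : ℝ), (0 : ℝ)), ((b : ℝ) - 4, (0 : ℝ)), ((i : ℝ) + 1, (1 : ℝ)),
    ((0 : ℝ), (2 : ℝ))}, ?_, by simp⟩, ?_⟩, ?_, ?_⟩
  · intro v hv
    simp only [Finset.mem_insert, Finset.mem_singleton] at hv
    rcases hv with rfl | rfl | rfl | rfl
    exacts [⟨⟨0, by simp⟩, ⟨0, by simp⟩⟩, ⟨⟨b - 4, by push_cast; rfl⟩, ⟨0, by simp⟩⟩,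
      ⟨⟨i + 1, by push_cast; rfl⟩, ⟨1, by simp⟩⟩, ⟨⟨0, by simp⟩, ⟨2, by simp⟩⟩]
  · have hpos : icount (shoe i b) ≠ 0 := by omega
    obtain ⟨x, hx, -⟩ := nonempty_of_ncard_ne_zero hpos
    exact ⟨x, hP ▸ hx⟩
  · rw [hP]
    exact bcount_shoe (by omega) (by omega) hb
  · rwa [hP]
end
end

section
/- Let P be a convex lattice polygon such that P⁽¹⁾, the convex hull of the lattice points in the interior of P, is 2-dimensional. Let n ∈ ℤ² be a primitive integer vector (its coordinates are coprime) and c ∈ ℤ be such that ⟨n, x⟩ ≤ c for all x ∈ P⁽¹⁾ and at least two distinct points of P⁽¹⁾ satisfy ⟨n, x⟩ = c. Then every point x ∈ P satisfies ⟨n, x⟩ ≤ c + 1. -/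
open Set MeasureTheory

noncomputable section

lemma face_mem {S : Set (ℝ × ℝ)} (fL : (ℝ × ℝ) →ₗ[ℝ] ℝ) (c : ℝ)
    (hS : ∀ s ∈ S, fL s ≤ c) {x : ℝ × ℝ} (hx : x ∈ convexHull ℝ S) (hfx : fL x = c) :
    x ∈ convexHull ℝ {s | s ∈ S ∧ fL s = c} := by
  rw [convexHull_eq] at hx
  obtain ⟨ι, t, w, z, h0, h1, hz, rfl⟩ := hx
  have hcm : fL (t.centerMass w z) = ∑ i ∈ t, w i * fL (z i) := by
    rw [Finset.centerMass_eq_of_sum_1 _ _ h1, map_sum]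
    simp [smul_eq_mul]
  have hzero : ∀ i ∈ t, w i * (c - fL (z i)) = 0 := by
    rw [← Finset.sum_eq_zero_iff_of_nonneg
      (fun i hi => mul_nonneg (h0 i hi) (sub_nonneg.2 (hS _ (hz i hi))))]
    have : ∑ i ∈ t, w i * (c - fL (z i)) = (∑ i ∈ t, w i) * c - ∑ i ∈ t, w i * fL (z i) := by
      rw [Finset.sum_mul, ← Finset.sum_sub_distrib]
      congr 1; ext i; ring
    rw [this, h1, ← hcm, hfx]; ring
  rw [← Finset.centerMass_filter_ne_zero]
  apply Finset.centerMass_mem_convexHull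
  · intro i hi; exact h0 i (Finset.mem_filter.1 hi).1
  · rw [Finset.sum_filter_ne_zero, h1]; norm_num
  · intro i hi
    obtain ⟨hit, hwi⟩ := Finset.mem_filter.1 hi
    refine ⟨hz i hit, ?_⟩
    have := hzero i hit
    rcases mul_eq_zero.1 this with h | h
    · exact absurd h hwi
    · linarith [sub_eq_zero.1 h]

lemma adj_interior {P : Set (ℝ × ℝ)} (hP : Convex ℝ P) {n1 n2 a1 a2 b1 b2 k : ℤ}
    (ha : (((a1 : ℤ) : ℝ), ((a2 : ℤ) : ℝ)) ∈ interior P)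
    (hb : (((b1 : ℤ) : ℝ), ((b2 : ℤ) : ℝ)) ∈ interior P)
    (hk : 1 ≤ k) (h1 : a1 = b1 - k * n2) (h2 : a2 = b2 + k * n1) :
    ((((b1 - n2 : ℤ)) : ℝ), (((b2 + n1 : ℤ)) : ℝ)) ∈ interior P := by
  have hkR : (1 : ℝ) ≤ (k : ℝ) := by exact_mod_cast hk
  have hk0 : (k : ℝ) ≠ 0 := by linarith
  have hmem := hP.interior hb ha (a := 1 - 1/(k:ℝ)) (b := 1/(k:ℝ))
    (by rw [sub_nonneg]; rw [div_le_one (by linarith)]; linarith)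
    (by positivity) (by ring)
  have hpt : (1 - 1/(k:ℝ)) • (((b1 : ℤ) : ℝ), ((b2 : ℤ) : ℝ))
      + (1/(k:ℝ)) • (((a1 : ℤ) : ℝ), ((a2 : ℤ) : ℝ))
      = ((((b1 - n2 : ℤ)) : ℝ), (((b2 + n1 : ℤ)) : ℝ)) := by
    have e1 : ((a1 : ℤ) : ℝ) = (b1 : ℝ) - (k : ℝ) * (n2 : ℝ) := by exact_mod_cast congrArg (Int.cast : ℤ → ℝ) h1
    have e2 : ((a2 : ℤ) : ℝ) = (b2 : ℝ) + (k : ℝ) * (n1 : ℝ) := by exact_mod_cast congrArg (Int.cast : ℤ → ℝ) h2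
    simp only [Prod.smul_mk, Prod.mk_add_mk, Prod.mk.injEq, smul_eq_mul]
    constructor
    · rw [e1]; push_cast; field_simp; ring
    · rw [e2]; push_cast; field_simp; ring
  rwa [hpt] at hmem

/-- If the inequality `⟨n, x⟩ ≤ c` (with `n` a primitive integer vector and `c ∈ ℤ`)
defines an edge of `P⁽¹⁾`, then `⟨n, x⟩ ≤ c + 1` holds on all of `P`. -/
theorem edge_shift (P : Set (ℝ × ℝ)) (hP : IsConvexLatticePolygon P)
    (h2 : (interior (innerHull P)).Nonempty)
    (n : ℤ × ℤ) (hn : IsCoprime n.1 n.2) (c : ℤ)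
    (hle : ∀ x ∈ innerHull P, (n.1 : ℝ) * x.1 + (n.2 : ℝ) * x.2 ≤ (c : ℝ))
    (hedge : ∃ x ∈ innerHull P, ∃ y ∈ innerHull P, x ≠ y ∧
      (n.1 : ℝ) * x.1 + (n.2 : ℝ) * x.2 = (c : ℝ) ∧
      (n.1 : ℝ) * y.1 + (n.2 : ℝ) * y.2 = (c : ℝ)) :
    ∀ x ∈ P, (n.1 : ℝ) * x.1 + (n.2 : ℝ) * x.2 ≤ (c : ℝ) + 1 := by
  classical
  obtain ⟨⟨V, hVlat, hPV⟩, hPint⟩ := hP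
  set fL : (ℝ × ℝ) →ₗ[ℝ] ℝ :=
    (n.1 : ℝ) • LinearMap.fst ℝ ℝ ℝ + (n.2 : ℝ) • LinearMap.snd ℝ ℝ ℝ with hfLdef
  have hfLapp : ∀ y : ℝ × ℝ, fL y = (n.1:ℝ) * y.1 + (n.2:ℝ) * y.2 := fun y => by
    simp [hfLdef, smul_eq_mul]
  have hPconv : Convex ℝ P := hPV ▸ convex_convexHull ℝ _
  obtain ⟨w1, w2, hw⟩ := hn
  -- hw : w1 * n.1 + w2 * n.2 = 1
  have hVne : V.Nonempty := by
    rcases hPint with ⟨x0, hx0⟩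
    have hx0P : x0 ∈ P := interior_subset hx0
    rw [hPV] at hx0P
    rcases Finset.eq_empty_or_nonempty V with h | h
    · rw [h] at hx0P; simp at hx0P
    · exact h
  obtain ⟨v0, hv0V, hv0max⟩ := V.exists_max_image (fun y => fL y) hVne
  have hmax : ∀ y ∈ P, fL y ≤ fL v0 := by
    intro y hy
    rw [hPV] at hy
    exact convexHull_min (fun u hu => hv0max u hu) (convex_halfSpace_le fL.isLinear _) hy
  obtain ⟨⟨p1, hp1⟩, ⟨p2, hp2⟩⟩ := hVlat v0 hv0V
  have hv0eq : v0 = ((p1:ℝ), (p2:ℝ)) := Prod.ext hp1 hp2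
  set d : ℤ := n.1 * p1 + n.2 * p2 with hddef
  have hfv0 : fL v0 = (d : ℝ) := by rw [hfLapp, hv0eq, hddef]; push_cast; ring
  intro x hx
  by_contra hcon
  push_neg at hcon
  have hdc : c + 2 ≤ d := by
    have h1 := hmax x hx
    rw [hfv0, hfLapp] at h1
    have h3 : (c:ℝ) + 1 < (d:ℝ) := lt_of_lt_of_le hcon h1
    have h4 : c + 1 < d := by exact_mod_cast h3
    omega
  -- two lattice points at level c
  set S : Set (ℝ × ℝ) := {y | y ∈ interior P ∧ latticePt y} with hSdef
  have hSub : S ⊆ innerHull P := subset_convexHull ℝ _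
  have hSle : ∀ s ∈ S, fL s ≤ (c:ℝ) := fun s hs => by
    rw [hfLapp]; exact hle s (hSub hs)
  obtain ⟨xe, hxe, ye, hye, hxy, hfxe, hfye⟩ := hedge
  have hxe' := face_mem fL (c:ℝ) hSle hxe (by rw [hfLapp]; exact hfxe)
  have hye' := face_mem fL (c:ℝ) hSle hye (by rw [hfLapp]; exact hfye)
  have hTnt : Set.Nontrivial {s | s ∈ S ∧ fL s = (c:ℝ)} := by
    rw [← Set.not_subsingleton_iff]
    intro hsub
    rcases hsub.eq_empty_or_singleton with h | ⟨p, h⟩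
    · rw [h, convexHull_empty] at hxe'; exact hxe'
    · rw [h, convexHull_singleton] at hxe' hye'
      exact hxy (hxe'.trans hye'.symm)
  obtain ⟨ap, ⟨⟨haint, halat⟩, hfa⟩, bp, ⟨⟨hbint, hblat⟩, hfb⟩, habne⟩ := hTnt
  obtain ⟨⟨A1, hA1⟩, ⟨A2, hA2⟩⟩ := halat
  obtain ⟨⟨B1, hB1⟩, ⟨B2, hB2⟩⟩ := hblat
  have hapeq : ap = ((A1:ℝ), (A2:ℝ)) := Prod.ext hA1 hA2
  have hbpeq : bp = ((B1:ℝ), (B2:ℝ)) := Prod.ext hB1 hB2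
  rw [hapeq] at haint habne hfa
  rw [hbpeq] at hbint habne hfb
  have hca : n.1 * A1 + n.2 * A2 = c := by
    rw [hfLapp] at hfa; simp only [Prod.fst, Prod.snd] at hfa; exact_mod_cast hfa
  have hcb : n.1 * B1 + n.2 * B2 = c := by
    rw [hfLapp] at hfb; simp only [Prod.fst, Prod.snd] at hfb; exact_mod_cast hfb
  -- coordinate identities
  have hA1' : A1 = c*w1 - (w1*A2 - w2*A1)*n.2 := by linear_combination (-A1) * hw + w1 * hca
  have hA2' : A2 = c*w2 + (w1*A2 - w2*A1)*n.1 := by linear_combination (-A2) * hw + w2 * hca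
  have hB1' : B1 = c*w1 - (w1*B2 - w2*B1)*n.2 := by linear_combination (-B1) * hw + w1 * hcb
  have hB2' : B2 = c*w2 + (w1*B2 - w2*B1)*n.1 := by linear_combination (-B2) * hw + w2 * hcb
  have hk0 : w1*A2 - w2*A1 ≠ w1*B2 - w2*B1 := by
    intro h
    apply habne
    have e1 : A1 = B1 := by rw [hA1', hB1', h]
    have e2 : A2 = B2 := by rw [hA2', hB2', h]
    rw [e1, e2]
  have hbase : ∃ b1 b2 : ℤ, n.1*b1 + n.2*b2 = c ∧ ((b1:ℝ),(b2:ℝ)) ∈ interior P ∧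
      (((b1 - n.2 : ℤ):ℝ), ((b2 + n.1 : ℤ):ℝ)) ∈ interior P := by
    rcases (lt_or_gt_of_ne hk0) with hlt | hgt
    · -- βa < βb : use A as base, B = A + k m with k = βb - βa ≥ 1
      refine ⟨A1, A2, hca, haint, ?_⟩
      exact adj_interior hPconv hbint haint (k := (w1*B2 - w2*B1) - (w1*A2 - w2*A1))
        (by omega) (by linear_combination hB1' - hA1') (by linear_combination hB2' - hA2')
    · refine ⟨B1, B2, hcb, hbint, ?_⟩
      exact adj_interior hPconv haint hbint (k := (w1*A2 - w2*A1) - (w1*B2 - w2*B1))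
        (by omega) (by linear_combination hA1' - hB1') (by linear_combination hA2' - hB2')
  obtain ⟨b1, b2, hcb2, hbint2, hb'int2⟩ := hbase
  -- the construction
  set h : ℤ := d - c with hhdef
  have hh2 : 2 ≤ h := by omega
  set βB : ℤ := w1*b2 - w2*b1 with hβBdef
  set βv : ℤ := w1*p2 - w2*p1 with hβvdef
  set q : ℤ := (βv - βB) / h with hqdef
  set r : ℤ := (βv - βB) % h with hrdef
  have hqr : h * q + r = βv - βB := Int.mul_ediv_add_emod (βv - βB) h
  have hr0 : 0 ≤ r := Int.emod_nonneg _ (by omega)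
  have hrh : r < h := Int.emod_lt_of_pos _ (by omega)
  set e : ℤ := if r = 0 then 0 else 1 with hedef
  set t : ℤ := βB + q + e with htdef
  have hHR : (2:ℝ) ≤ (h:ℝ) := by exact_mod_cast hh2
  have hH0 : (h:ℝ) ≠ 0 := by linarith
  have hH1 : (h:ℝ) - 1 ≠ 0 := by linarith
  set σ : ℝ := ((h:ℝ)*(t:ℝ) - (βv:ℝ))/((h:ℝ)-1) - (βB:ℝ) with hσdef
  have hσeq : σ = ((h*e - r : ℤ):ℝ)/((h:ℝ)-1) := by
    have hqrR : (h:ℝ)*(q:ℝ) + (r:ℝ) = (βv:ℝ) - (βB:ℝ) := by exact_mod_cast hqr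
    rw [hσdef, htdef]
    push_cast
    field_simp
    linear_combination hqrR
  have hNbd : 0 ≤ h*e - r ∧ h*e - r ≤ h - 1 := by
    rw [hedef]; split_ifs with hre <;> omega
  have hσ0 : 0 ≤ σ := by
    rw [hσeq]
    apply div_nonneg _ (by linarith)
    exact_mod_cast hNbd.1
  have hσ1 : σ ≤ 1 := by
    rw [hσeq, div_le_one (by linarith)]
    have : ((h*e - r : ℤ):ℝ) ≤ ((h - 1 : ℤ):ℝ) := by exact_mod_cast hNbd.2
    push_cast at this ⊢
    linarith
  -- u in interior
  have huint : ((b1:ℝ) - σ*(n.2:ℝ), (b2:ℝ) + σ*(n.1:ℝ)) ∈ interior P := by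
    have hmem := hPconv.interior hbint2 hb'int2 (a := 1 - σ) (b := σ)
      (by linarith) hσ0 (by ring)
    have hpt : (1 - σ) • (((b1:ℤ):ℝ), ((b2:ℤ):ℝ))
        + σ • (((b1 - n.2 : ℤ):ℝ), ((b2 + n.1 : ℤ):ℝ))
        = ((b1:ℝ) - σ*(n.2:ℝ), (b2:ℝ) + σ*(n.1:ℝ)) := by
      simp only [Prod.smul_mk, Prod.mk_add_mk, Prod.mk.injEq, smul_eq_mul]
      constructor <;> (push_cast; ring)
    rwa [hpt] at hmem
  -- coordinate identities for b and p (real)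
  have hb1R : (b1:ℝ) = (c:ℝ)*w1 - (βB:ℝ)*n.2 := by
    have : b1 = c*w1 - βB*n.2 := by
      rw [hβBdef]; linear_combination (-b1) * hw + w1 * hcb2
    exact_mod_cast this
  have hb2R : (b2:ℝ) = (c:ℝ)*w2 + (βB:ℝ)*n.1 := by
    have : b2 = c*w2 + βB*n.1 := by
      rw [hβBdef]; linear_combination (-b2) * hw + w2 * hcb2
    exact_mod_cast this
  have hp1R : (p1:ℝ) = ((c:ℝ) + (h:ℝ))*w1 - (βv:ℝ)*n.2 := by
    have : p1 = (c + h)*w1 - βv*n.2 := by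
      rw [hβvdef, hhdef, hddef]; ring_nf; linear_combination (-p1) * hw
    exact_mod_cast this
  have hp2R : (p2:ℝ) = ((c:ℝ) + (h:ℝ))*w2 + (βv:ℝ)*n.1 := by
    have : p2 = (c + h)*w2 + βv*n.1 := by
      rw [hβvdef, hhdef, hddef]; ring_nf; linear_combination (-p2) * hw
    exact_mod_cast this
  -- the new interior lattice point
  set z : ℝ × ℝ := ((((c+1)*w1 - t*n.2 : ℤ):ℝ), (((c+1)*w2 + t*n.1 : ℤ):ℝ)) with hzdef
  have hzcombo : z = (1 - 1/(h:ℝ)) • ((b1:ℝ) - σ*(n.2:ℝ), (b2:ℝ) + σ*(n.1:ℝ))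
      + (1/(h:ℝ)) • ((p1:ℝ), (p2:ℝ)) := by
    rw [hzdef]
    simp only [Prod.smul_mk, Prod.mk_add_mk, Prod.mk.injEq, smul_eq_mul]
    constructor
    · rw [hb1R, hp1R, hσdef]; push_cast; field_simp; ring
    · rw [hb2R, hp2R, hσdef]; push_cast; field_simp; ring
  have hv0P : ((p1:ℝ), (p2:ℝ)) ∈ P := by
    rw [← hv0eq, hPV]; exact subset_convexHull ℝ _ hv0V
  have hzint : z ∈ interior P := by
    rw [hzcombo]
    exact hPconv.combo_interior_self_mem_interior huint hv0P
      (sub_pos.2 ((div_lt_one (by linarith)).2 (by linarith)))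
      (by positivity) (by ring)
  have hzS : z ∈ S := ⟨hzint, ⟨⟨_, rfl⟩, ⟨_, rfl⟩⟩⟩
  have hfin := hle z (hSub hzS)
  have hzval : (n.1:ℝ) * z.1 + (n.2:ℝ) * z.2 = (c:ℝ) + 1 := by
    have hwR : (w1:ℝ) * n.1 + (w2:ℝ) * n.2 = 1 := by exact_mod_cast hw
    rw [hzdef]
    push_cast
    linear_combination ((c:ℝ)+1) * hwR
  rw [hzval] at hfin
  linarith
end
end

section
/- Box inequalities: Let P be a convex lattice polygon with P ⊆ [0, p'] × [0, p] for positive integers p ≤ p', such that P contains points with first coordinate 0, points with first coordinate p', points with second coordinate 0, and points with second coordinate p. Let q be the length of the segment P ∩ {x : x₂ = p} and q' the length of the segment P ∩ {x : x₂ = 0} (each is a nonnegative integer, possibly 0). Then b(P) ≤ q + q' + 2p and a(P) ≥ p(q + q')/2. -/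
/-!
Every boundary lattice point of `P` lies on a row `x₂ = k` with `0 ≤ k ≤ p`. The rows `k = 0` and
`k = p` meet `P` in segments of lengths `q'` and `q`, so they carry at most `q' + 1` and `q + 1`
lattice points. Every intermediate row passes through an interior point of `P` (on the segment
from an interior point to a point of the top or bottom edge), and a boundary point on a chord
through an interior point is one of the two endpoints of the chord; so these rows carry at most
`2 (p - 1)` boundary points.

By convexity `P` contains the trapezoid spanned by its top and bottom edges, of area
`p (q + q') / 2`.
-/

open Set MeasureTheory

noncomputable section

section OrderedField

variable {𝕜 E F : Type*} [Field 𝕜] [LinearOrder 𝕜] [IsStrictOrderedRing 𝕜]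
  [AddCommGroup E] [Module 𝕜 E] [TopologicalSpace E] [IsTopologicalAddGroup E]
  [ContinuousConstSMul 𝕜 E] {P : Set E}

theorem Convex.openSegment_subset_interior_of_mem_segment (hP : Convex 𝕜 P) {a b w : E}
    (ha : a ∈ P) (hb : b ∈ P) (hw : w ∈ interior P) (hwab : w ∈ segment 𝕜 a b) :
    openSegment 𝕜 a b ⊆ interior P := by
  rw [segment_eq_image_lineMap] at hwab
  refine (openSegment_subset_union a b (mem_range_of_mem_image _ _ hwab)).trans ?_
  rintro x (rfl | hx | hx)
  · exact hw
  · rw [openSegment_symm] at hx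
    exact hP.openSegment_interior_self_subset_interior hw ha hx
  · exact hP.openSegment_interior_self_subset_interior hw hb hx

theorem Convex.exists_mem_interior_apply_eq [AddCommGroup F] [Module 𝕜 F] (hP : Convex 𝕜 P)
    (f : E →ᵃ[𝕜] F) {z u : E} (hz : z ∈ interior P) (hu : u ∈ P) {y : F}
    (hy : y ∈ openSegment 𝕜 (f z) (f u)) : ∃ w ∈ interior P, f w = y := by
  rw [← image_openSegment] at hy
  obtain ⟨w, hw, rfl⟩ := hy
  exact ⟨w, hP.openSegment_interior_self_subset_interior hz hu hw, rfl⟩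

end OrderedField

theorem Convex.exists_mem_interior_snd_eq {P : Set (ℝ × ℝ)} (hP : Convex ℝ P)
    (hint : (interior P).Nonempty) {a b : ℝ × ℝ} (ha : a ∈ P) (hb : b ∈ P) {y : ℝ}
    (hy : y ∈ Ioo a.2 b.2) : ∃ w ∈ interior P, w.2 = y := by
  obtain ⟨z, hz⟩ := hint
  rcases lt_trichotomy z.2 y with hzy | rfl | hyz
  · refine hP.exists_mem_interior_apply_eq (LinearMap.snd ℝ ℝ ℝ).toAffineMap hz hb ?_
    simp only [LinearMap.coe_toAffineMap, LinearMap.snd_apply]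
    rw [openSegment_eq_Ioo (hzy.trans hy.2)]
    exact ⟨hzy, hy.2⟩
  · exact ⟨z, hz, rfl⟩
  · refine hP.exists_mem_interior_apply_eq (LinearMap.snd ℝ ℝ ℝ).toAffineMap hz ha ?_
    simp only [LinearMap.coe_toAffineMap, LinearMap.snd_apply]
    rw [openSegment_symm, openSegment_eq_Ioo (hy.1.trans hyz)]
    exact ⟨hy.1, hyz⟩

def rowSlice (P : Set (ℝ × ℝ)) (y : ℝ) : Set ℝ := (fun t => (t, y)) ⁻¹' P

@[simp]
theorem mem_rowSlice {P : Set (ℝ × ℝ)} {y t : ℝ} : t ∈ rowSlice P y ↔ (t, y) ∈ P := Iff.rfl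

theorem rowSlice_eq_Icc {P : Set (ℝ × ℝ)} {y a b : ℝ}
    (h : {x : ℝ × ℝ | x ∈ P ∧ x.2 = y} = Icc (a, y) (b, y)) : rowSlice P y = Icc a b := by
  ext t
  simpa [Prod.mk_le_mk] using Set.ext_iff.1 h (t, y)

theorem IsCompact.rowSlice {P : Set (ℝ × ℝ)} (hP : IsCompact P) (y : ℝ) :
    IsCompact (rowSlice P y) :=
  (hP.image continuous_fst).of_isClosed_subset
    (hP.isClosed.preimage (continuous_id.prodMk continuous_const))
    fun t ht => ⟨(t, y), ht, rfl⟩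

theorem Convex.fst_eq_sInf_or_sSup_of_mem_frontier {P : Set (ℝ × ℝ)} (hP : Convex ℝ P)
    (hPc : IsCompact P) {w x : ℝ × ℝ} (hw : w ∈ interior P) (hx : x ∈ frontier P)
    (hxw : x.2 = w.2) : x.1 = sInf (rowSlice P w.2) ∨ x.1 = sSup (rowSlice P w.2) := by
  set S := rowSlice P w.2
  have hS : IsCompact S := hPc.rowSlice w.2
  have hwS : w.1 ∈ S := interior_subset (s := P) hw
  have hxS : x.1 ∈ S := by
    change (x.1, w.2) ∈ P
    rw [← hxw]
    exact hPc.isClosed.frontier_subset hx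
  by_contra! hne
  have hlx : sInf S < x.1 := (csInf_le hS.bddBelow hxS).lt_of_ne' hne.1
  have hxr : x.1 < sSup S := (le_csSup hS.bddAbove hxS).lt_of_ne hne.2
  have hwseg : w ∈ segment ℝ (sInf S, w.2) (sSup S, w.2) := by
    rw [← Prod.image_mk_segment_left, segment_eq_Icc (hlx.trans hxr).le]
    exact ⟨w.1, ⟨csInf_le hS.bddBelow hwS, le_csSup hS.bddAbove hwS⟩, rfl⟩
  have hxseg : x ∈ openSegment ℝ (sInf S, w.2) (sSup S, w.2) := by
    rw [← Prod.image_mk_openSegment_left, openSegment_eq_Ioo (hlx.trans hxr)]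
    exact ⟨x.1, ⟨hlx, hxr⟩, by rw [← hxw]⟩
  exact hx.2 (hP.openSegment_subset_interior_of_mem_segment (hS.sInf_mem ⟨_, hwS⟩)
    (hS.sSup_mem ⟨_, hwS⟩) hw hwseg hxseg)

def latticeSegment (a : ℝ) (q : ℕ) (y : ℝ) : Finset (ℝ × ℝ) :=
  (Finset.Icc ⌈a⌉ ⌊a + q⌋).image fun m : ℤ => ((m : ℝ), y)

theorem card_latticeSegment_le (a : ℝ) (q : ℕ) (y : ℝ) : (latticeSegment a q y).card ≤ q + 1 := by
  refine Finset.card_image_le.trans ?_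
  have hfloor : ⌊a + q⌋ = ⌊a⌋ + q := by exact_mod_cast Int.floor_add_intCast a q
  have := Int.floor_le_ceil a
  rw [Int.card_Icc]
  omega

theorem mem_latticeSegment {a : ℝ} {q : ℕ} {x : ℝ × ℝ} (hx : latticePt x)
    (hxa : x.1 ∈ Icc a (a + q)) : x ∈ latticeSegment a q x.2 := by
  obtain ⟨⟨m, hm⟩, -⟩ := hx
  rw [hm] at hxa
  exact Finset.mem_image.2 ⟨m, Finset.mem_Icc.2 ⟨Int.ceil_le.2 hxa.1, Int.le_floor.2 hxa.2⟩,
    by rw [← hm]⟩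

def rowEnds (P : Set (ℝ × ℝ)) (p : ℕ) : Finset (ℝ × ℝ) :=
  (Finset.Ioo 0 p).biUnion fun k =>
    {(sInf (rowSlice P k), (k : ℝ)), (sSup (rowSlice P k), (k : ℝ))}

theorem card_rowEnds_le (P : Set (ℝ × ℝ)) (p : ℕ) : (rowEnds P p).card ≤ 2 * (p - 1) := by
  refine (Finset.card_biUnion_le_card_mul _ _ 2 fun _ _ => Finset.card_le_two).trans ?_
  rw [Nat.card_Ioo, mul_comm, Nat.sub_zero]

section Boundary

variable {P : Set (ℝ × ℝ)} {p : ℕ}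

theorem frontier_latticePt_subset (hP : Convex ℝ P) (hPc : IsCompact P)
    (hint : (interior P).Nonempty) (hstrip : ∀ x ∈ P, 0 ≤ x.2 ∧ x.2 ≤ p)
    {a b : ℝ × ℝ} (ha : a ∈ P) (ha0 : a.2 = 0) (hb : b ∈ P) (hbp : b.2 = p)
    {α β : ℝ} {q q' : ℕ} (hbotrow : rowSlice P 0 ⊆ Icc β (β + q'))
    (htoprow : rowSlice P p ⊆ Icc α (α + q)) :
    {x | x ∈ frontier P ∧ latticePt x} ⊆
      ↑(latticeSegment β q' 0 ∪ latticeSegment α q p ∪ rowEnds P p) := by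
  rintro ⟨x, y⟩ ⟨hfr, hlat⟩
  have hxy : (x, y) ∈ P := hPc.isClosed.frontier_subset hfr
  obtain ⟨hy0, hyp⟩ := hstrip _ hxy
  obtain ⟨n, rfl⟩ := hlat.2
  lift n to ℕ using (by exact_mod_cast (show (0 : ℝ) ≤ n from hy0))
  simp only [Int.cast_natCast, Nat.cast_le] at hfr hlat hxy hyp
  simp only [Finset.coe_union, mem_union, Finset.mem_coe]
  rcases (show n = 0 ∨ n = p ∨ 0 < n ∧ n < p by omega) with rfl | rfl | ⟨hn0, hnp⟩
  · left; left
    simpa using mem_latticeSegment hlat (hbotrow (by simpa using hxy))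
  · exact Or.inl (Or.inr (mem_latticeSegment hlat (htoprow hxy)))
  · right
    obtain ⟨w, hw, hwn⟩ := hP.exists_mem_interior_snd_eq hint ha hb (y := n)
      (by rw [ha0, hbp]; exact ⟨by exact_mod_cast hn0, by exact_mod_cast hnp⟩)
    refine Finset.mem_biUnion.2 ⟨n, Finset.mem_Ioo.2 ⟨hn0, hnp⟩, ?_⟩
    rcases hP.fst_eq_sInf_or_sSup_of_mem_frontier hPc hw hfr hwn.symm with h | h <;>
      dsimp only at h <;> simp [h, hwn]

theorem bcount_le (hP : Convex ℝ P) (hPc : IsCompact P)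
    (hint : (interior P).Nonempty) (hp : 1 ≤ p) (hstrip : ∀ x ∈ P, 0 ≤ x.2 ∧ x.2 ≤ p)
    {a b : ℝ × ℝ} (ha : a ∈ P) (ha0 : a.2 = 0) (hb : b ∈ P) (hbp : b.2 = p)
    {α β : ℝ} {q q' : ℕ} (hbotrow : rowSlice P 0 ⊆ Icc β (β + q'))
    (htoprow : rowSlice P p ⊆ Icc α (α + q)) :
    bcount P ≤ q + q' + 2 * p := by
  calc bcount P ≤ (latticeSegment β q' 0 ∪ latticeSegment α q p ∪ rowEnds P p).card := by
        rw [bcount, ← ncard_coe_finset]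
        exact ncard_le_ncard (frontier_latticePt_subset hP hPc hint hstrip ha ha0 hb hbp
          hbotrow htoprow) (Finset.finite_toSet _)
    _ ≤ (q' + 1) + (q + 1) + 2 * (p - 1) := by
        grw [Finset.card_union_le, Finset.card_union_le, card_latticeSegment_le,
          card_latticeSegment_le, card_rowEnds_le]
    _ = q + q' + 2 * p := by omega

end Boundary

section Trapezoid

variable {P : Set (ℝ × ℝ)} {a₀ b₀ a₁ b₁ h : ℝ}

theorem Convex.regionBetween_trapezoid_subset (hP : Convex ℝ P) (ha₀ : (a₀, 0) ∈ P)
    (hb₀ : (b₀, 0) ∈ P) (ha₁ : (a₁, h) ∈ P) (hb₁ : (b₁, h) ∈ P) (hh : 0 < h) :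
    regionBetween (fun y => a₀ + (a₁ - a₀) * (y / h)) (fun y => b₀ + (b₁ - b₀) * (y / h))
      (Ioo 0 h) ⊆ Prod.swap ⁻¹' P := by
  rintro ⟨y, x⟩ ⟨⟨hy0, hyh⟩, hxf, hxg⟩
  set t := y / h
  set s := (x - (a₀ + (a₁ - a₀) * t)) / ((b₀ + (b₁ - b₀) * t) - (a₀ + (a₁ - a₀) * t))
  have hw : 0 < (b₀ + (b₁ - b₀) * t) - (a₀ + (a₁ - a₀) * t) := by linarith
  have ht : t ∈ Icc (0 : ℝ) 1 := ⟨by positivity, (div_le_one hh).2 hyh.le⟩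
  have hs : s ∈ Icc (0 : ℝ) 1 := ⟨div_nonneg (by linarith) hw.le, (div_le_one hw).2 (by linarith)⟩
  -- `(x, y)` lies at height `y` on the segment joining the points at relative position `s` on
  -- the bottom and top edges
  have hbot := hP ha₀ hb₀ (sub_nonneg.2 hs.2) hs.1 (sub_add_cancel 1 s)
  have htop := hP ha₁ hb₁ (sub_nonneg.2 hs.2) hs.1 (sub_add_cancel 1 s)
  have hmem := hP hbot htop (sub_nonneg.2 ht.2) ht.1 (sub_add_cancel 1 t)
  change (x, y) ∈ P
  convert hmem using 1
  have hst : s * ((b₀ + (b₁ - b₀) * t) - (a₀ + (a₁ - a₀) * t)) = x - (a₀ + (a₁ - a₀) * t) :=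
    div_mul_cancel₀ _ hw.ne'
  have hth : t * h = y := div_mul_cancel₀ _ hh.ne'
  ext
  · simp only [Prod.fst_add, Prod.smul_fst, smul_eq_mul]
    linear_combination -hst
  · simp only [Prod.snd_add, Prod.smul_snd, smul_eq_mul]
    linear_combination -hth

theorem integral_trapezoid_width (hh : 0 < h) :
    ∫ y in Ioo 0 h, (b₀ + (b₁ - b₀) * (y / h)) - (a₀ + (a₁ - a₀) * (y / h)) =
      h * ((b₀ - a₀) + (b₁ - a₁)) / 2 := by
  rw [← integral_Ioc_eq_integral_Ioo, ← intervalIntegral.integral_of_le hh.le]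
  have hlin (y : ℝ) : (b₀ + (b₁ - b₀) * (y / h)) - (a₀ + (a₁ - a₀) * (y / h)) =
      (b₀ - a₀) + ((b₁ - a₁) - (b₀ - a₀)) / h * y := by
    ring
  simp only [hlin]
  rw [intervalIntegral.integral_add intervalIntegrable_const
    (intervalIntegral.intervalIntegrable_id.const_mul _), intervalIntegral.integral_const,
    intervalIntegral.integral_const_mul, integral_id]
  field_simp
  ring

theorem Convex.ofReal_trapezoid_area_le_volume (hP : Convex ℝ P) (hPm : NullMeasurableSet P)
    (ha₀ : (a₀, 0) ∈ P) (hb₀ : (b₀, 0) ∈ P) (ha₁ : (a₁, h) ∈ P) (hb₁ : (b₁, h) ∈ P)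
    (hab₀ : a₀ ≤ b₀) (hab₁ : a₁ ≤ b₁) (hh : 0 < h) :
    ENNReal.ofReal (h * ((b₀ - a₀) + (b₁ - a₁)) / 2) ≤ volume P := by
  have hfg : ∀ y ∈ Ioo 0 h, a₀ + (a₁ - a₀) * (y / h) ≤ b₀ + (b₁ - b₀) * (y / h) := by
    intro y hy
    have : 0 ≤ y / h := div_nonneg hy.1.le hh.le
    have : y / h ≤ 1 := (div_le_one hh).2 hy.2.le
    nlinarith
  have hint (c d : ℝ) : IntegrableOn (fun y => c + d * (y / h)) (Ioo 0 h) :=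
    (by fun_prop : Continuous _).integrableOn_Icc.mono_set Ioo_subset_Icc_self
  calc ENNReal.ofReal (h * ((b₀ - a₀) + (b₁ - a₁)) / 2)
      = volume.prod volume (regionBetween (fun y => a₀ + (a₁ - a₀) * (y / h))
          (fun y => b₀ + (b₁ - b₀) * (y / h)) (Ioo 0 h)) := by
        rw [volume_regionBetween_eq_integral (hint _ _) (hint _ _) measurableSet_Ioo hfg]
        rw [← integral_trapezoid_width hh]
        rfl
    _ ≤ volume.prod volume (Prod.swap ⁻¹' P) :=
        measure_mono (hP.regionBetween_trapezoid_subset ha₀ hb₀ ha₁ hb₁ hh)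
    _ = volume P := by
        rw [Measure.measurePreserving_swap.measure_preimage hPm, ← Measure.volume_eq_prod]

end Trapezoid

theorem box_inequalities_general (P : Set (ℝ × ℝ)) (hP : IsConvexLatticePolygon P)
    (p p' : ℕ) (hp : 1 ≤ p)
    (hsub : P ⊆ Set.Icc ((0 : ℝ), (0 : ℝ)) ((p' : ℝ), (p : ℝ)))
    (q q' : ℕ)
    (htopseg : ∃ α : ℝ,
      {x : ℝ × ℝ | x ∈ P ∧ x.2 = (p : ℝ)} = Set.Icc (α, (p : ℝ)) (α + (q : ℝ), (p : ℝ)))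
    (hbotseg : ∃ α : ℝ,
      {x : ℝ × ℝ | x ∈ P ∧ x.2 = 0} = Set.Icc (α, (0 : ℝ)) (α + (q' : ℝ), (0 : ℝ))) :
    bcount P ≤ q + q' + 2 * p ∧ (p : ℝ) * ((q : ℝ) + (q' : ℝ)) / 2 ≤ area P := by
  obtain ⟨⟨V, -, hPV⟩, hint⟩ := hP
  have hconv : Convex ℝ P := hPV ▸ convex_convexHull ℝ _
  have hcomp : IsCompact P := hPV ▸ V.finite_toSet.isCompact_convexHull (𝕜 := ℝ)
  obtain ⟨α, htop⟩ := htopseg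
  obtain ⟨β, hbot⟩ := hbotseg
  replace htop := rowSlice_eq_Icc htop
  replace hbot := rowSlice_eq_Icc hbot
  have mem_row {y a b t : ℝ} (h : rowSlice P y = Icc a b) (ht : t ∈ Icc a b) : (t, y) ∈ P :=
    (h.symm ▸ ht : t ∈ rowSlice P y)
  have hα : α ≤ α + q := le_add_of_nonneg_right q.cast_nonneg
  have hβ : β ≤ β + q' := le_add_of_nonneg_right q'.cast_nonneg
  refine ⟨bcount_le hconv hcomp hint hp (fun x hx => ⟨(hsub hx).1.2, (hsub hx).2.2⟩)
    (mem_row hbot (left_mem_Icc.2 hβ)) rfl (mem_row htop (left_mem_Icc.2 hα)) rfl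
    hbot.subset htop.subset, ?_⟩
  rw [area, ← ENNReal.ofReal_le_iff_le_toReal hcomp.measure_lt_top.ne]
  convert hconv.ofReal_trapezoid_area_le_volume hcomp.isClosed.measurableSet.nullMeasurableSet
    (mem_row hbot (left_mem_Icc.2 hβ)) (mem_row hbot (right_mem_Icc.2 hβ))
    (mem_row htop (left_mem_Icc.2 hα)) (mem_row htop (right_mem_Icc.2 hα)) hβ hα
    (by exact_mod_cast hp) using 2
  ring

/-- Box inequalities: if `P` fits tightly in the box `[0, p'] × [0, p]` with `p ≤ p'`,
and meets the top and bottom edges of the box in segments of (integer) lengths `q`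
and `q'`, then `b(P) ≤ q + q' + 2p` and `a(P) ≥ p(q + q')/2`. -/
theorem box_inequalities (P : Set (ℝ × ℝ)) (hP : IsConvexLatticePolygon P)
    (p p' : ℕ) (hp : 1 ≤ p) (hpp' : p ≤ p')
    (hsub : P ⊆ Set.Icc ((0 : ℝ), (0 : ℝ)) ((p' : ℝ), (p : ℝ)))
    (hleft : ∃ x ∈ P, x.1 = 0) (hright : ∃ x ∈ P, x.1 = (p' : ℝ))
    (hbot : ∃ x ∈ P, x.2 = 0) (htop : ∃ x ∈ P, x.2 = (p : ℝ))
    (q q' : ℕ)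
    (htopseg : ∃ α : ℝ,
      {x : ℝ × ℝ | x ∈ P ∧ x.2 = (p : ℝ)} = Set.Icc (α, (p : ℝ)) (α + (q : ℝ), (p : ℝ)))
    (hbotseg : ∃ α : ℝ,
      {x : ℝ × ℝ | x ∈ P ∧ x.2 = 0} = Set.Icc (α, (0 : ℝ)) (α + (q' : ℝ), (0 : ℝ))) :
    bcount P ≤ q + q' + 2 * p ∧ (p : ℝ) * ((q : ℝ) + (q' : ℝ)) / 2 ≤ area P :=
  box_inequalities_general P hP p p' hp hsub q q' htopseg hbotseg
end
end
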